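/- Let V = (V_1,…,V_k) be subsets of {1,…,n} such that M_V has rank k over K, with Grassmann necklace elements I_1,…,I_n, and let R(V) ∈ ℝ[x] be the product of the distinct prime factors of ∏_{a=1}^{n} Δ_{I_a}(x). For every real evaluation x̂ of the variables, with A = M_V(x̂) the evaluated real k×n matrix: (a) every set of columns of A that is linearly independent over ℝ is independent in the column matroid M(V); (b) R(V)(x̂) = 0 if and only if Δ_{I_a}(x̂) = 0 for some a; (c) if A has rank k and R(V)(x̂) = 0, then the column matroid of A is strictly contained in M(V), and in particular differs from M(V). -/

import Mathlib

open MvPolynomial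

/-- The polynomial ring `ℝ[x_{i,j}]` in `k·n` independent variables. -/
abbrev PR (k n : ℕ) : Type := MvPolynomial (Fin k × Fin n) ℝ

/-- Its field of fractions `K`. -/
abbrev FF (k n : ℕ) : Type := FractionRing (PR k n)

/-- The variable-valued matrix `M_V` with polynomial entries: the `(i,j)` entry is
`x_{i,j}` if `j ∈ V_i` and `0` otherwise. -/
noncomputable def MVpoly (k n : ℕ) (V : Fin k → Finset (Fin n)) :
    Matrix (Fin k) (Fin n) (PR k n) :=
  Matrix.of fun i j => if j ∈ V i then X (i, j) else 0

/-- The variable-valued matrix `M_V` over the field `K`. -/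
noncomputable def MV (k n : ℕ) (V : Fin k → Finset (Fin n)) :
    Matrix (Fin k) (Fin n) (FF k n) :=
  Matrix.of fun i j => algebraMap (PR k n) (FF k n) (MVpoly k n V i j)

/-- Linear independence over `F` of the columns of a matrix indexed by a set `S`. -/
def ColsIndep {k n : ℕ} {F : Type*} [Field F] (M : Matrix (Fin k) (Fin n) F)
    (S : Finset (Fin n)) : Prop :=
  LinearIndependent F (fun j : {x : Fin n // x ∈ S} => fun i : Fin k => M i (j : Fin n))

/-- The minor `Δ_S(x) ∈ ℝ[x]` of `M_V` on a `k`-element set `S` of columns (and `0`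
if `S` does not have `k` elements); well defined up to the sign of the chosen
enumeration of `S`. -/
noncomputable def minorF (k n : ℕ) (V : Fin k → Finset (Fin n))
    (S : Finset (Fin n)) : PR k n :=
  if h : S.card = k then
    ((MVpoly k n V).submatrix id
      (fun i : Fin k => ((S.equivFin.symm (Fin.cast h.symm i)) : Fin n))).det
  else 0

/-- The position of `x` in the cyclic order `<ₐ` starting at `a`. -/
def keyF (n : ℕ) (a x : Fin n) : ℕ := ((x : ℕ) + n - (a : ℕ)) % n

/-- The Gale order `≤ₐ` associated to the cyclic shift `<ₐ`:  `S ≤ₐ T` iff the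
sorted lists of positions agree in length and are pointwise `≤`. -/
def GaleLEat (n : ℕ) (a : Fin n) (S T : Finset (Fin n)) : Prop :=
  List.Forall₂ (· ≤ ·)
    ((S.image (keyF n a)).sort (· ≤ ·)) ((T.image (keyF n a)).sort (· ≤ ·))

/-- `S` is a basis of columns of `M_V`: it has `k` elements and its maximal minor is
nonzero. -/
def IsBasisF (k n : ℕ) (V : Fin k → Finset (Fin n)) (S : Finset (Fin n)) : Prop :=
  S.card = k ∧ minorF k n V S ≠ 0

/-- `S` is the Grassmann necklace element `I_a`: the `≤ₐ`-least basis. -/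
def NecklaceAt (k n : ℕ) (V : Fin k → Finset (Fin n)) (a : Fin n)
    (S : Finset (Fin n)) : Prop :=
  IsBasisF k n V S ∧ ∀ T : Finset (Fin n), IsBasisF k n V T → GaleLEat n a S T

/-- `S` is the reverse Grassmann necklace element `I*_a`: the `≤ₐ`-greatest basis. -/
def CoNecklaceAt (k n : ℕ) (V : Fin k → Finset (Fin n)) (a : Fin n)
    (S : Finset (Fin n)) : Prop :=
  IsBasisF k n V S ∧ ∀ T : Finset (Fin n), IsBasisF k n V T → GaleLEat n a T S

/-- The column matroid `M(V)` is a positroid of rank `k`: some real `k×n` matrix of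
rank `k` with all (column-ordered) `k×k` minors nonnegative has exactly the same
linearly independent column sets as `M_V`. -/
def IsPositroidRep (k n : ℕ) (V : Fin k → Finset (Fin n)) : Prop :=
  ∃ A : Matrix (Fin k) (Fin n) ℝ, A.rank = k ∧
    (∀ f : Fin k → Fin n, StrictMono f → 0 ≤ (A.submatrix id f).det) ∧
    (∀ S : Finset (Fin n), ColsIndep A S ↔ ColsIndep (MV k n V) S)

/-- The real matrix obtained by evaluating the entries of `M_V` at real values `x̂`. -/
noncomputable def evalMat (k n : ℕ) (V : Fin k → Finset (Fin n))
    (xhat : Fin k × Fin n → ℝ) : Matrix (Fin k) (Fin n) ℝ :=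
  Matrix.of fun i j => eval xhat (MVpoly k n V i j)


/-! Independence of a set of columns over a field means that some maximal minor of those
columns is nonzero. Determinants commute with ring homomorphisms, so a minor of `M_V` that
survives the evaluation `x ↦ x̂` is a nonzero polynomial and hence nonzero in `K`. For (b),
`R(V)` divides `∏ₐ Δ_{I_a}` and the latter divides a power of `R(V)`, so both vanish at the
same real points. For (c), a necklace element `I_a` with `Δ_{I_a}(x̂) = 0` is a basis of
`M(V)` that is not independent in `A`. -/

open Matrix

section ColumnIndependence

variable {F : Type*} [Field F]

theorem exists_det_submatrix_ne_zero_of_linearIndependent_col {m ι : Type*} [Fintype m]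
    [Fintype ι] [DecidableEq ι] {C : Matrix m ι F} (h : LinearIndependent F C.col) :
    ∃ r : ι → m, (C.submatrix r id).det ≠ 0 := by
  obtain ⟨κ, a, -, hspan, hli⟩ := exists_linearIndependent' F C.row
  have : Finite κ := hli.finite
  have : Fintype κ := Fintype.ofFinite κ
  have hcard : Fintype.card ι = Fintype.card κ := by
    rw [linearIndependent_iff_card_eq_finrank_span.mp hli, Set.finrank, hspan,
      ← rank_eq_finrank_span_row, ← rank_transpose, ← h.rank_matrix]
  let e : ι ≃ κ := Fintype.equivOfCardEq hcard
  have hrows : LinearIndependent F (C.submatrix (a ∘ e) id).row := hli.comp e e.injective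
  exact ⟨a ∘ e,
    ((isUnit_iff_isUnit_det _).mp (linearIndependent_rows_iff_isUnit.mp hrows)).ne_zero⟩

theorem linearIndependent_col_of_det_submatrix_ne_zero {m ι : Type*} [Fintype ι]
    [DecidableEq ι] {C : Matrix m ι F} {r : ι → m} (h : (C.submatrix r id).det ≠ 0) :
    LinearIndependent F C.col :=
  (linearIndependent_cols_of_det_ne_zero h).of_comp (LinearMap.funLeft F F r)

theorem linearIndependent_col_map_of_injective {R L : Type*} [CommRing R] [Field L]
    {m ι : Type*} [Fintype m] [Fintype ι] [DecidableEq ι] {φ : R →+* F} {ψ : R →+* L}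
    (hψ : Function.Injective ψ) {C : Matrix m ι R} (h : LinearIndependent F (C.map φ).col) :
    LinearIndependent L (C.map ψ).col := by
  obtain ⟨r, hr⟩ := exists_det_submatrix_ne_zero_of_linearIndependent_col h
  refine linearIndependent_col_of_det_submatrix_ne_zero (r := r) ?_
  rw [submatrix_map, ← RingHom.mapMatrix_apply, ← RingHom.map_det] at hr ⊢
  exact (map_ne_zero_iff ψ hψ).mpr (ne_zero_of_map hr)

theorem ColsIndep.map_of_injective {R L : Type*} [CommRing R] [Field L] {k n : ℕ}
    {φ : R →+* F} {ψ : R →+* L} (hψ : Function.Injective ψ) {M : Matrix (Fin k) (Fin n) R}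
    {S : Finset (Fin n)} (h : ColsIndep (M.map φ) S) : ColsIndep (M.map ψ) S :=
  linearIndependent_col_map_of_injective (C := M.submatrix id Subtype.val) hψ h

theorem colsIndep_iff_det_ne_zero {k n : ℕ} (M : Matrix (Fin k) (Fin n) F)
    {S : Finset (Fin n)} (hS : S.card = k) :
    ColsIndep M S ↔ (M.submatrix id fun i : Fin k =>
      ((S.equivFin.symm (Fin.cast hS.symm i) : S) : Fin n)).det ≠ 0 := by
  rw [ColsIndep, ← linearIndependent_equiv ((finCongr hS.symm).trans S.equivFin.symm),
    ← isUnit_iff_ne_zero, ← isUnit_iff_isUnit_det, ← linearIndependent_cols_iff_isUnit]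
  rfl

end ColumnIndependence

theorem colsIndep_map_MVpoly_iff {F : Type*} [Field F] {k n : ℕ} (V : Fin k → Finset (Fin n))
    (φ : PR k n →+* F) {S : Finset (Fin n)} (hS : S.card = k) :
    ColsIndep ((MVpoly k n V).map φ) S ↔ φ (minorF k n V S) ≠ 0 := by
  rw [colsIndep_iff_det_ne_zero _ hS, minorF, dif_pos hS, RingHom.map_det, submatrix_map]
  rfl

theorem map_eq_zero_iff_of_span_eq_radical {R S : Type*} [CommRing R] [CommRing S]
    [IsReduced S] (φ : R →+* S) {r p : R}
    (h : Ideal.span {r} = (Ideal.span {p}).radical) : φ r = 0 ↔ φ p = 0 := by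
  constructor
  · intro hr
    obtain ⟨c, rfl⟩ := Ideal.mem_span_singleton'.mp
      (h ▸ Ideal.le_radical (Ideal.mem_span_singleton_self p))
    rw [map_mul, hr, mul_zero]
  · intro hp
    obtain ⟨m, hm⟩ := Ideal.mem_radical_iff.mp (h ▸ Ideal.mem_span_singleton_self r)
    obtain ⟨d, hd⟩ := Ideal.mem_span_singleton.mp hm
    exact IsNilpotent.eq_zero ⟨m, by rw [← map_pow, hd, map_mul, hp, zero_mul]⟩

theorem statement10_general (k n : ℕ) (V : Fin k → Finset (Fin n))
    (I : Fin n → Finset (Fin n)) (hI : ∀ a : Fin n, NecklaceAt k n V a (I a))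
    (RV : PR k n)
    (hRV : Ideal.span {RV} = (Ideal.span {∏ a : Fin n, minorF k n V (I a)}).radical)
    (xhat : Fin k × Fin n → ℝ) :
    (∀ S : Finset (Fin n),
        ColsIndep (evalMat k n V xhat) S → ColsIndep (MV k n V) S) ∧
    (eval xhat RV = 0 ↔ ∃ a : Fin n, eval xhat (minorF k n V (I a)) = 0) ∧
    ((evalMat k n V xhat).rank = k → eval xhat RV = 0 →
      ((∀ S : Finset (Fin n),
          ColsIndep (evalMat k n V xhat) S → ColsIndep (MV k n V) S) ∧
        ∃ S : Finset (Fin n),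
          ColsIndep (MV k n V) S ∧ ¬ ColsIndep (evalMat k n V xhat) S)) := by
  have hinj : Function.Injective (algebraMap (PR k n) (FF k n)) := IsFractionRing.injective _ _
  have indep_of_eval (S : Finset (Fin n)) :
      ColsIndep (evalMat k n V xhat) S → ColsIndep (MV k n V) S :=
    ColsIndep.map_of_injective (φ := eval xhat) hinj
  have hRV_zero : eval xhat RV = 0 ↔ ∃ a : Fin n, eval xhat (minorF k n V (I a)) = 0 := by
    rw [map_eq_zero_iff_of_span_eq_radical (eval xhat) hRV, map_prod, Finset.prod_eq_zero_iff]
    simp only [Finset.mem_univ, true_and]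
  refine ⟨indep_of_eval, hRV_zero, fun _ hR => ⟨indep_of_eval, ?_⟩⟩
  obtain ⟨a, ha⟩ := hRV_zero.mp hR
  obtain ⟨⟨hcard, hbasis⟩, -⟩ := hI a
  refine ⟨I a, ?_, fun h => (colsIndep_map_MVpoly_iff V (eval xhat) hcard).mp h ha⟩
  exact (colsIndep_map_MVpoly_iff V _ hcard).mpr ((map_ne_zero_iff _ hinj).mpr hbasis)

/-- let `M_V` have rank `k`, with Grassmann necklace `I`, and let
`R(V)` be the product of the distinct prime factors of `∏_a Δ_{I_a}(x)` (i.e. a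
generator of the radical of the principal ideal generated by this product).  For
every real evaluation `x̂`, with `A = M_V(x̂)`:
(a) every ℝ-independent column set of `A` is independent in the column matroid of `M_V`;
(b) `R(V)(x̂) = 0` iff some necklace minor vanishes at `x̂`;
(c) if `A` has rank `k` and `R(V)(x̂) = 0`, then the column matroid of `A` is strictly
contained in that of `M_V`. -/
theorem statement10 (k n : ℕ) (V : Fin k → Finset (Fin n))
    (hrank : (MV k n V).rank = k)
    (I : Fin n → Finset (Fin n)) (hI : ∀ a : Fin n, NecklaceAt k n V a (I a))
    (RV : PR k n)
    (hRV : Ideal.span {RV} = (Ideal.span {∏ a : Fin n, minorF k n V (I a)}).radical)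
    (xhat : Fin k × Fin n → ℝ) :
    (∀ S : Finset (Fin n),
        ColsIndep (evalMat k n V xhat) S → ColsIndep (MV k n V) S) ∧
    (eval xhat RV = 0 ↔ ∃ a : Fin n, eval xhat (minorF k n V (I a)) = 0) ∧
    ((evalMat k n V xhat).rank = k → eval xhat RV = 0 →
      ((∀ S : Finset (Fin n),
          ColsIndep (evalMat k n V xhat) S → ColsIndep (MV k n V) S) ∧
        ∃ S : Finset (Fin n),
          ColsIndep (MV k n V) S ∧ ¬ ColsIndep (evalMat k n V xhat) S)) :=
  statement10_general k n V I hI RV hRV xhat
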